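/- arXiv:1706.08880 — 7 statements merged into one kernel-verified Lean document; each statement's English description precedes it below -/
import Mathlib

section
/- Strict-inequality propagation for the infimum operator (Step 1 of the key lemma): let T > 0, n ≥ 1, 𝒱 a convex cone of ℝⁿ, V : [0,T]×ℝⁿ → ℝ bounded, and χ : [0,T]×𝒱 → ℝ bounded below and satisfying χ(t,η₁+η₂) ≤ χ(t,η₁)+χ(t,η₂)−h(t) for all t ∈ [0,T] and η₁,η₂ ∈ 𝒱, where h(t) > 0. Fix (t₀,x₀) ∈ [0,T]×ℝⁿ and 0 < α < h(t₀). Then there exists η₀ ∈ 𝒱 such that V(t₀,x₀+η₀) + χ(t₀,η₀) ≤ H^χ_inf V(t₀,x₀) + α and H^χ_inf V(t₀,x₀+η₀) ≥ V(t₀,x₀+η₀) + h(t₀) − α; in particular H^χ_inf V(t₀,x₀+η₀) > V(t₀,x₀+η₀). -/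
/-!
Take `η₀` to be `α`-optimal for `H^χ_inf V(t₀,x₀)`. Since the cone is closed under addition,
every competitor `η` for `H^χ_inf V(t₀,x₀+η₀)` gives the competitor `η₀ + η` for
`H^χ_inf V(t₀,x₀)`, which by the strict subadditivity of `χ` costs at least `h(t₀)` less than
paying for `η₀` and `η` separately. Hence `H^χ_inf V(t₀,x₀+η₀) ≥ H^χ_inf V(t₀,x₀) - χ(t₀,η₀) + h(t₀)`, and `α`-optimality of
`η₀` turns this into the claimed bound.
-/

open Set

noncomputable section

/-- The nonlocal infimum operator `H^χ_inf W(t,x) = inf_{η ∈ 𝒱} [W(t, x+η) + χ(t,η)]`. -/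
def Hinf {n : ℕ} (V : Set (EuclideanSpace ℝ (Fin n)))
    (χ : ℝ → EuclideanSpace ℝ (Fin n) → ℝ)
    (W : ℝ → EuclideanSpace ℝ (Fin n) → ℝ) (t : ℝ) (x : EuclideanSpace ℝ (Fin n)) : ℝ :=
  sInf ((fun η => W t (x + η) + χ t η) '' V)

section Hinf

variable {n : ℕ} {𝒱 : Set (EuclideanSpace ℝ (Fin n))} {χ W : ℝ → EuclideanSpace ℝ (Fin n) → ℝ}
  {t : ℝ} {x η₀ : EuclideanSpace ℝ (Fin n)}

lemma bddBelow_Hinf_image (hW : BddBelow (range (W t))) (hχ : BddBelow (χ t '' 𝒱)) :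
    BddBelow ((fun η => W t (x + η) + χ t η) '' 𝒱) :=
  (hW.add hχ).mono <| by
    rintro _ ⟨η, hη, rfl⟩
    exact add_mem_add (mem_range_self _) (mem_image_of_mem _ hη)

lemma Hinf_le (hbdd : BddBelow ((fun η => W t (x + η) + χ t η) '' 𝒱)) {η : EuclideanSpace ℝ (Fin n)}
    (hη : η ∈ 𝒱) : Hinf 𝒱 χ W t x ≤ W t (x + η) + χ t η :=
  csInf_le hbdd (mem_image_of_mem _ hη)

lemma exists_lt_Hinf_add (h𝒱 : 𝒱.Nonempty) {α : ℝ} (hα : 0 < α) :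
    ∃ η ∈ 𝒱, W t (x + η) + χ t η < Hinf 𝒱 χ W t x + α := by
  obtain ⟨_, ⟨η, hη, rfl⟩, hlt⟩ := Real.lt_sInf_add_pos (h𝒱.image _) hα
  exact ⟨η, hη, hlt⟩

lemma Hinf_sub_add_le_Hinf_add (hadd : ∀ η₁ ∈ 𝒱, ∀ η₂ ∈ 𝒱, η₁ + η₂ ∈ 𝒱) {δ : ℝ}
    (hgap : ∀ η₁ ∈ 𝒱, ∀ η₂ ∈ 𝒱, χ t (η₁ + η₂) ≤ χ t η₁ + χ t η₂ - δ)
    (hbdd : BddBelow ((fun η => W t (x + η) + χ t η) '' 𝒱)) (hη₀ : η₀ ∈ 𝒱) :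
    Hinf 𝒱 χ W t x - χ t η₀ + δ ≤ Hinf 𝒱 χ W t (x + η₀) := by
  refine le_csInf (Set.Nonempty.image _ ⟨η₀, hη₀⟩) ?_
  rintro _ ⟨η, hη, rfl⟩
  have hsum := Hinf_le hbdd (hadd η₀ hη₀ η hη)
  rw [← add_assoc] at hsum
  linarith [hgap η₀ hη₀ η hη]

end Hinf

theorem Hinf_strict_propagation_general {n : ℕ} (T : ℝ)
    (𝒱 : ConvexCone ℝ (EuclideanSpace ℝ (Fin n)))
    (h𝒱 : (𝒱 : Set (EuclideanSpace ℝ (Fin n))).Nonempty)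
    (V : ℝ → EuclideanSpace ℝ (Fin n) → ℝ)
    (hVbdd : ∃ M : ℝ, ∀ t ∈ Icc (0 : ℝ) T, ∀ x : EuclideanSpace ℝ (Fin n), |V t x| ≤ M)
    (χ : ℝ → EuclideanSpace ℝ (Fin n) → ℝ)
    (hχlb : ∃ m : ℝ, ∀ t ∈ Icc (0 : ℝ) T, ∀ η ∈ 𝒱, m ≤ χ t η)
    (h : ℝ → ℝ)
    (hgap : ∀ t ∈ Icc (0 : ℝ) T, ∀ η₁ ∈ 𝒱, ∀ η₂ ∈ 𝒱,
        χ t (η₁ + η₂) ≤ χ t η₁ + χ t η₂ - h t)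
    (t₀ : ℝ) (ht₀ : t₀ ∈ Icc (0 : ℝ) T) (x₀ : EuclideanSpace ℝ (Fin n))
    (α : ℝ) (hα : 0 < α) (hαh : α < h t₀) :
    ∃ η₀ ∈ 𝒱,
      V t₀ (x₀ + η₀) + χ t₀ η₀ ≤ Hinf (𝒱 : Set (EuclideanSpace ℝ (Fin n))) χ V t₀ x₀ + α ∧
      V t₀ (x₀ + η₀) + h t₀ - α ≤
        Hinf (𝒱 : Set (EuclideanSpace ℝ (Fin n))) χ V t₀ (x₀ + η₀) ∧
      V t₀ (x₀ + η₀) < Hinf (𝒱 : Set (EuclideanSpace ℝ (Fin n))) χ V t₀ (x₀ + η₀) := by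
  obtain ⟨M, hM⟩ := hVbdd
  obtain ⟨m, hm⟩ := hχlb
  have hbdd : BddBelow ((fun η => V t₀ (x₀ + η) + χ t₀ η) '' 𝒱) :=
    bddBelow_Hinf_image ⟨-M, by rintro _ ⟨y, rfl⟩; exact (abs_le.1 (hM t₀ ht₀ y)).1⟩
      ⟨m, by rintro _ ⟨η, hη, rfl⟩; exact hm t₀ ht₀ η hη⟩
  obtain ⟨η₀, hη₀, hopt⟩ := exists_lt_Hinf_add h𝒱 hα
  have hshift := Hinf_sub_add_le_Hinf_add (fun _ h₁ _ h₂ => 𝒱.add_mem h₁ h₂) (hgap t₀ ht₀)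
    hbdd hη₀
  exact ⟨η₀, hη₀, hopt.le, by linarith, by linarith⟩

/-- **Strict-inequality propagation for the infimum operator (Step 1 of the key lemma).**
If `χ(t, η₁+η₂) ≤ χ(t,η₁) + χ(t,η₂) − h(t)` with `h(t₀) > 0` and `0 < α < h(t₀)`, then there is
`η₀ ∈ 𝒱` which is `α`-optimal for `H^χ_inf V(t₀,x₀)` and satisfies
`H^χ_inf V(t₀, x₀+η₀) ≥ V(t₀, x₀+η₀) + h(t₀) − α > V(t₀, x₀+η₀)`. -/
theorem Hinf_strict_propagation {n : ℕ} (hn : 1 ≤ n) (T : ℝ) (hT : 0 < T)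
    (𝒱 : ConvexCone ℝ (EuclideanSpace ℝ (Fin n)))
    (h𝒱 : (𝒱 : Set (EuclideanSpace ℝ (Fin n))).Nonempty)
    (V : ℝ → EuclideanSpace ℝ (Fin n) → ℝ)
    (hVbdd : ∃ M : ℝ, ∀ t ∈ Icc (0 : ℝ) T, ∀ x : EuclideanSpace ℝ (Fin n), |V t x| ≤ M)
    (χ : ℝ → EuclideanSpace ℝ (Fin n) → ℝ)
    (hχlb : ∃ m : ℝ, ∀ t ∈ Icc (0 : ℝ) T, ∀ η ∈ 𝒱, m ≤ χ t η)
    (h : ℝ → ℝ) (hpos : ∀ t ∈ Icc (0 : ℝ) T, 0 < h t)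
    (hgap : ∀ t ∈ Icc (0 : ℝ) T, ∀ η₁ ∈ 𝒱, ∀ η₂ ∈ 𝒱,
        χ t (η₁ + η₂) ≤ χ t η₁ + χ t η₂ - h t)
    (t₀ : ℝ) (ht₀ : t₀ ∈ Icc (0 : ℝ) T) (x₀ : EuclideanSpace ℝ (Fin n))
    (α : ℝ) (hα : 0 < α) (hαh : α < h t₀) :
    ∃ η₀ ∈ 𝒱,
      V t₀ (x₀ + η₀) + χ t₀ η₀ ≤ Hinf (𝒱 : Set (EuclideanSpace ℝ (Fin n))) χ V t₀ x₀ + α ∧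
      V t₀ (x₀ + η₀) + h t₀ - α ≤
        Hinf (𝒱 : Set (EuclideanSpace ℝ (Fin n))) χ V t₀ (x₀ + η₀) ∧
      V t₀ (x₀ + η₀) < Hinf (𝒱 : Set (EuclideanSpace ℝ (Fin n))) χ V t₀ (x₀ + η₀) :=
  Hinf_strict_propagation_general T 𝒱 h𝒱 V hVbdd χ hχlb h hgap t₀ ht₀ x₀ α hα hαh
end
end

section
/- Strict-inequality propagation for the supremum operator (Step 2 of the key lemma): let T > 0, n ≥ 1, 𝒰 a convex cone of ℝⁿ, U : [0,T]×ℝⁿ → ℝ bounded, and c : [0,T]×𝒰 → ℝ bounded below and satisfying c(t,ξ₁+ξ₂) ≤ c(t,ξ₁)+c(t,ξ₂)−h(t) for all t ∈ [0,T] and ξ₁,ξ₂ ∈ 𝒰, where h(t) > 0. Fix (t₀,x₀) ∈ [0,T]×ℝⁿ and 0 < α < h(t₀). Then there exists ξ₀ ∈ 𝒰 such that U(t₀,x₀+ξ₀) − c(t₀,ξ₀) ≥ H^c_sup U(t₀,x₀) − α and H^c_sup U(t₀,x₀+ξ₀) ≤ U(t₀,x₀+ξ₀) − h(t₀) + α;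 in particular H^c_sup U(t₀,x₀+ξ₀) < U(t₀,x₀+ξ₀). -/
/-!
A jump `ξ₀ ∈ 𝒰` followed by a jump `ξ ∈ 𝒰` is the single jump `ξ₀ + ξ ∈ 𝒰`, which the strict
subadditivity of `c` makes cheaper by `h`; hence `H(x₀ + ξ₀) ≤ H(x₀) + c(ξ₀) − h`. Choosing `ξ₀`
`α`-optimal for `H(x₀)` turns this into `H(x₀ + ξ₀) ≤ U(x₀ + ξ₀) − h + α`.
-/

open Set

noncomputable section

/-- The nonlocal supremum operator `H^c_sup W(t,x) = sup_{ξ ∈ 𝒰} [W(t, x+ξ) − c(t,ξ)]`. -/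
def Hsup {n : ℕ} (U : Set (EuclideanSpace ℝ (Fin n)))
    (c : ℝ → EuclideanSpace ℝ (Fin n) → ℝ)
    (W : ℝ → EuclideanSpace ℝ (Fin n) → ℝ) (t : ℝ) (x : EuclideanSpace ℝ (Fin n)) : ℝ :=
  sSup ((fun ξ => W t (x + ξ) - c t ξ) '' U)

section

variable {n : ℕ} {S : Set (EuclideanSpace ℝ (Fin n))} {c W : ℝ → EuclideanSpace ℝ (Fin n) → ℝ}
  {t : ℝ} {x ξ₀ : EuclideanSpace ℝ (Fin n)}

lemma bddAbove_Hsup_image (hW : BddAbove (range (W t))) (hc : BddBelow (c t '' S))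
    (x : EuclideanSpace ℝ (Fin n)) : BddAbove ((fun ξ => W t (x + ξ) - c t ξ) '' S) := by
  obtain ⟨M, hM⟩ := hW
  obtain ⟨m, hm⟩ := hc
  refine ⟨M - m, ?_⟩
  rintro _ ⟨ξ, hξ, rfl⟩
  have hWξ : W t (x + ξ) ≤ M := hM (mem_range_self _)
  have hcξ : m ≤ c t ξ := hm (mem_image_of_mem _ hξ)
  dsimp only
  linarith

lemma le_Hsup (hbdd : BddAbove ((fun ξ => W t (x + ξ) - c t ξ) '' S))
    {ξ : EuclideanSpace ℝ (Fin n)} (hξ : ξ ∈ S) : W t (x + ξ) - c t ξ ≤ Hsup S c W t x :=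
  le_csSup hbdd ⟨ξ, hξ, rfl⟩

lemma exists_Hsup_sub_lt (hS : S.Nonempty) {ε : ℝ} (hε : 0 < ε) :
    ∃ ξ ∈ S, Hsup S c W t x - ε < W t (x + ξ) - c t ξ := by
  obtain ⟨_, ⟨ξ, hξ, rfl⟩, hlt⟩ :=
    exists_lt_of_lt_csSup (hS.image _) (sub_lt_self (Hsup S c W t x) hε)
  exact ⟨ξ, hξ, hlt⟩

lemma Hsup_add_le {g : ℝ} (hadd : ∀ ξ₁ ∈ S, ∀ ξ₂ ∈ S, ξ₁ + ξ₂ ∈ S)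
    (hgap : ∀ ξ₁ ∈ S, ∀ ξ₂ ∈ S, c t (ξ₁ + ξ₂) ≤ c t ξ₁ + c t ξ₂ - g)
    (hbdd : BddAbove ((fun ξ => W t (x + ξ) - c t ξ) '' S)) (hξ₀ : ξ₀ ∈ S) :
    Hsup S c W t (x + ξ₀) ≤ Hsup S c W t x + c t ξ₀ - g := by
  refine csSup_le ⟨_, ξ₀, hξ₀, rfl⟩ ?_
  rintro _ ⟨ξ, hξ, rfl⟩
  have hjump := le_Hsup hbdd (hadd ξ₀ hξ₀ ξ hξ)
  have hcost := hgap ξ₀ hξ₀ ξ hξ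
  dsimp only
  rw [add_assoc]
  linarith

end

theorem Hsup_strict_propagation_general {n : ℕ} (T : ℝ)
    (𝒰 : ConvexCone ℝ (EuclideanSpace ℝ (Fin n)))
    (h𝒰 : (𝒰 : Set (EuclideanSpace ℝ (Fin n))).Nonempty)
    (U : ℝ → EuclideanSpace ℝ (Fin n) → ℝ)
    (hUbdd : ∃ M : ℝ, ∀ t ∈ Icc (0 : ℝ) T, ∀ x : EuclideanSpace ℝ (Fin n), |U t x| ≤ M)
    (c : ℝ → EuclideanSpace ℝ (Fin n) → ℝ)
    (hclb : ∃ m : ℝ, ∀ t ∈ Icc (0 : ℝ) T, ∀ ξ ∈ 𝒰, m ≤ c t ξ)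
    (h : ℝ → ℝ)
    (hgap : ∀ t ∈ Icc (0 : ℝ) T, ∀ ξ₁ ∈ 𝒰, ∀ ξ₂ ∈ 𝒰,
        c t (ξ₁ + ξ₂) ≤ c t ξ₁ + c t ξ₂ - h t)
    (t₀ : ℝ) (ht₀ : t₀ ∈ Icc (0 : ℝ) T) (x₀ : EuclideanSpace ℝ (Fin n))
    (α : ℝ) (hα : 0 < α) (hαh : α < h t₀) :
    ∃ ξ₀ ∈ 𝒰,
      Hsup (𝒰 : Set (EuclideanSpace ℝ (Fin n))) c U t₀ x₀ - α ≤
        U t₀ (x₀ + ξ₀) - c t₀ ξ₀ ∧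
      Hsup (𝒰 : Set (EuclideanSpace ℝ (Fin n))) c U t₀ (x₀ + ξ₀) ≤
        U t₀ (x₀ + ξ₀) - h t₀ + α ∧
      Hsup (𝒰 : Set (EuclideanSpace ℝ (Fin n))) c U t₀ (x₀ + ξ₀) < U t₀ (x₀ + ξ₀) := by
  obtain ⟨M, hM⟩ := hUbdd
  obtain ⟨m, hm⟩ := hclb
  have hbdd := bddAbove_Hsup_image (S := 𝒰) (c := c)
    ⟨M, forall_mem_range.2 fun x => (abs_le.1 (hM t₀ ht₀ x)).2⟩
    ⟨m, forall_mem_image.2 (hm t₀ ht₀)⟩ x₀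
  obtain ⟨ξ₀, hξ₀, hopt⟩ := exists_Hsup_sub_lt (c := c) (W := U) (t := t₀) (x := x₀) h𝒰 hα
  have hprop := Hsup_add_le (fun _ h₁ _ h₂ => 𝒰.add_mem h₁ h₂) (hgap t₀ ht₀) hbdd hξ₀
  exact ⟨ξ₀, hξ₀, hopt.le, by linarith, by linarith⟩

/-- **Strict-inequality propagation for the supremum operator (Step 2 of the key lemma).**
If `c(t, ξ₁+ξ₂) ≤ c(t,ξ₁) + c(t,ξ₂) − h(t)` with `h(t₀) > 0` and `0 < α < h(t₀)`, then there is
`ξ₀ ∈ 𝒰` which is `α`-optimal for `H^c_sup U(t₀,x₀)` and satisfies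
`H^c_sup U(t₀, x₀+ξ₀) ≤ U(t₀, x₀+ξ₀) − h(t₀) + α < U(t₀, x₀+ξ₀)`. -/
theorem Hsup_strict_propagation {n : ℕ} (hn : 1 ≤ n) (T : ℝ) (hT : 0 < T)
    (𝒰 : ConvexCone ℝ (EuclideanSpace ℝ (Fin n)))
    (h𝒰 : (𝒰 : Set (EuclideanSpace ℝ (Fin n))).Nonempty)
    (U : ℝ → EuclideanSpace ℝ (Fin n) → ℝ)
    (hUbdd : ∃ M : ℝ, ∀ t ∈ Icc (0 : ℝ) T, ∀ x : EuclideanSpace ℝ (Fin n), |U t x| ≤ M)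
    (c : ℝ → EuclideanSpace ℝ (Fin n) → ℝ)
    (hclb : ∃ m : ℝ, ∀ t ∈ Icc (0 : ℝ) T, ∀ ξ ∈ 𝒰, m ≤ c t ξ)
    (h : ℝ → ℝ) (hpos : ∀ t ∈ Icc (0 : ℝ) T, 0 < h t)
    (hgap : ∀ t ∈ Icc (0 : ℝ) T, ∀ ξ₁ ∈ 𝒰, ∀ ξ₂ ∈ 𝒰,
        c t (ξ₁ + ξ₂) ≤ c t ξ₁ + c t ξ₂ - h t)
    (t₀ : ℝ) (ht₀ : t₀ ∈ Icc (0 : ℝ) T) (x₀ : EuclideanSpace ℝ (Fin n))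
    (α : ℝ) (hα : 0 < α) (hαh : α < h t₀) :
    ∃ ξ₀ ∈ 𝒰,
      Hsup (𝒰 : Set (EuclideanSpace ℝ (Fin n))) c U t₀ x₀ - α ≤
        U t₀ (x₀ + ξ₀) - c t₀ ξ₀ ∧
      Hsup (𝒰 : Set (EuclideanSpace ℝ (Fin n))) c U t₀ (x₀ + ξ₀) ≤
        U t₀ (x₀ + ξ₀) - h t₀ + α ∧
      Hsup (𝒰 : Set (EuclideanSpace ℝ (Fin n))) c U t₀ (x₀ + ξ₀) < U t₀ (x₀ + ξ₀) :=
  Hsup_strict_propagation_general T 𝒰 h𝒰 U hUbdd c hclb h hgap t₀ ht₀ x₀ α hα hαh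
end
end

section
/- Persistence of strict obstacle inequalities in a neighborhood (Step 3 of the key lemma): let T > 0 and n ≥ 1, let 𝒰 ⊆ 𝒱 be convex cones of ℝⁿ, let U, V : [0,T]×ℝⁿ → ℝ be bounded and uniformly continuous, and let c : [0,T]×𝒰 → ℝ and χ : [0,T]×𝒱 → ℝ be bounded below and uniformly continuous. Suppose that at some (t₀,x̄) ∈ [0,T)×ℝⁿ there exists α > 0 with U(t₀,x̄) ≥ H^c_sup U(t₀,x̄) + α and V(t₀,x̄) ≤ H^χ_inf V(t₀,x̄) − α. Then there exists δ > 0 with t₀ + δ < T such that for every (t,x) ∈ [(t₀−δ)∨0, t₀+δ] × B̄(x̄,δ) one has U(t,x) > H^c_sup U(t,x) and V(t,x) < H^χ_inf V(t,x). -/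
/-!
Uniform continuity of `W` and `c` lets every term `W(t, x + ξ) - c(t, ξ)` of `H^c_sup W(t, x)`
move by less than `α / 2` when `(t, x)` moves by less than some `δ`, while `W(t, x)` moves by less
than `α / 4`; so the gap `α` at `(t₀, x̄)` leaves a positive gap nearby. The infimum case is the
supremum case for `-V`, since `H^χ_inf V = -H^χ_sup (-V)`.
-/

open Set Metric Function

noncomputable section

/- Since `|f - g| ≤ ε` holds both ways, `f '' s` and `g '' s` are bounded above together, so the
bound survives the convention `sSup = 0` for empty or unbounded sets. -/
theorem Real.sSup_image_le_sSup_image_add {ι : Type*} {s : Set ι} {f g : ι → ℝ} {ε : ℝ}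
    (hε : 0 ≤ ε) (hfg : ∀ i ∈ s, |f i - g i| ≤ ε) :
    sSup (f '' s) ≤ sSup (g '' s) + ε := by
  rcases s.eq_empty_or_nonempty with rfl | hs
  · simpa using hε
  by_cases hg : BddAbove (g '' s)
  · refine csSup_le (hs.image f) ?_
    rintro _ ⟨i, hi, rfl⟩
    have hgi : g i ≤ sSup (g '' s) := le_csSup hg (mem_image_of_mem g hi)
    linarith [(abs_le.1 (hfg i hi)).2]
  · have hf : ¬BddAbove (f '' s) := by
      rintro ⟨M, hM⟩
      refine hg ⟨M + ε, ?_⟩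
      rintro _ ⟨i, hi, rfl⟩
      linarith [hM (mem_image_of_mem f hi), (abs_le.1 (hfg i hi)).1]
    simp [Real.sSup_of_not_bddAbove hf, Real.sSup_of_not_bddAbove hg, hε]

theorem UniformContinuousOn.exists_pos_forall_dist_lt_of_prod
    {α β γ : Type*} [PseudoMetricSpace α] [PseudoMetricSpace β] [PseudoMetricSpace γ]
    {F : α → β → γ} {s : Set α} {t : Set β}
    (hF : UniformContinuousOn (fun p : α × β => F p.1 p.2) (s ×ˢ t)) {ε : ℝ} (hε : 0 < ε) :
    ∃ δ > 0, ∀ a ∈ s, ∀ a' ∈ s, ∀ b ∈ t, ∀ b' ∈ t,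
      dist a a' < δ → dist b b' < δ → dist (F a b) (F a' b') < ε := by
  obtain ⟨δ, hδ, hF⟩ := Metric.uniformContinuousOn_iff.1 hF ε hε
  exact ⟨δ, hδ, fun a ha a' ha' b hb b' hb' haa' hbb' =>
    hF (a, b) ⟨ha, hb⟩ (a', b') ⟨ha', hb'⟩ (by rw [Prod.dist_eq]; exact max_lt haa' hbb')⟩

theorem Hinf_eq_neg_Hsup_neg {n : ℕ} (S : Set (EuclideanSpace ℝ (Fin n)))
    (χ W : ℝ → EuclideanSpace ℝ (Fin n) → ℝ) (t : ℝ) (x : EuclideanSpace ℝ (Fin n)) :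
    Hinf S χ W t x = -Hsup S χ (-W) t x := by
  rw [Hinf, Hsup, Real.sInf_def, ← image_neg_eq_neg, image_image]
  refine congrArg (fun s => -sSup s) (image_congr fun η _ => ?_)
  show -(W t (x + η) + χ t η) = -W t (x + η) - χ t η
  ring

theorem exists_pos_Hsup_lt_of_Hsup_add_le {n : ℕ} {I : Set ℝ} {S : Set (EuclideanSpace ℝ (Fin n))}
    {c W : ℝ → EuclideanSpace ℝ (Fin n) → ℝ}
    (hWuc : UniformContinuousOn (fun p : ℝ × EuclideanSpace ℝ (Fin n) => W p.1 p.2) (I ×ˢ univ))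
    (hcuc : UniformContinuousOn (fun p : ℝ × EuclideanSpace ℝ (Fin n) => c p.1 p.2) (I ×ˢ S))
    {t₀ : ℝ} (ht₀ : t₀ ∈ I) {x₀ : EuclideanSpace ℝ (Fin n)} {α : ℝ} (hα : 0 < α)
    (h : Hsup S c W t₀ x₀ + α ≤ W t₀ x₀) :
    ∃ δ > 0, ∀ t ∈ I, dist t t₀ < δ → ∀ x, dist x x₀ < δ → Hsup S c W t x < W t x := by
  obtain ⟨δW, hδW, hW⟩ := hWuc.exists_pos_forall_dist_lt_of_prod (ε := α / 4) (by positivity)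
  obtain ⟨δc, hδc, hc⟩ := hcuc.exists_pos_forall_dist_lt_of_prod (ε := α / 4) (by positivity)
  refine ⟨min δW δc, lt_min hδW hδc, fun t ht htt₀ x hxx₀ => ?_⟩
  have hW_near (ξ : EuclideanSpace ℝ (Fin n)) : |W t (x + ξ) - W t₀ (x₀ + ξ)| < α / 4 := by
    rw [← Real.dist_eq]
    refine hW t ht t₀ ht₀ _ trivial _ trivial (htt₀.trans_le (min_le_left _ _)) ?_
    rw [dist_add_right]
    exact hxx₀.trans_le (min_le_left _ _)
  have hc_near (ξ) (hξ : ξ ∈ S) : |c t ξ - c t₀ ξ| < α / 4 := by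
    rw [← Real.dist_eq]
    exact hc t ht t₀ ht₀ ξ hξ ξ hξ (htt₀.trans_le (min_le_right _ _)) (by simpa using hδc)
  have hHsup : Hsup S c W t x ≤ Hsup S c W t₀ x₀ + α / 2 := by
    refine Real.sSup_image_le_sSup_image_add (by positivity) fun ξ hξ => ?_
    obtain ⟨hW₁, hW₂⟩ := abs_lt.1 (hW_near ξ)
    obtain ⟨hc₁, hc₂⟩ := abs_lt.1 (hc_near ξ hξ)
    rw [abs_le]
    constructor <;> linarith
  have hWx := abs_lt.1 (hW_near 0)
  simp only [add_zero] at hWx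
  linarith [hWx.1]

theorem strict_obstacle_persistence_general {n : ℕ} (T : ℝ)
    (𝒰 𝒱 : ConvexCone ℝ (EuclideanSpace ℝ (Fin n)))
    (U V : ℝ → EuclideanSpace ℝ (Fin n) → ℝ)
    (hUuc : UniformContinuousOn (fun p : ℝ × EuclideanSpace ℝ (Fin n) => U p.1 p.2)
      (Icc (0 : ℝ) T ×ˢ univ))
    (hVuc : UniformContinuousOn (fun p : ℝ × EuclideanSpace ℝ (Fin n) => V p.1 p.2)
      (Icc (0 : ℝ) T ×ˢ univ))
    (c χ : ℝ → EuclideanSpace ℝ (Fin n) → ℝ)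
    (hcuc : UniformContinuousOn (fun p : ℝ × EuclideanSpace ℝ (Fin n) => c p.1 p.2)
      (Icc (0 : ℝ) T ×ˢ (𝒰 : Set (EuclideanSpace ℝ (Fin n)))))
    (hχuc : UniformContinuousOn (fun p : ℝ × EuclideanSpace ℝ (Fin n) => χ p.1 p.2)
      (Icc (0 : ℝ) T ×ˢ (𝒱 : Set (EuclideanSpace ℝ (Fin n)))))
    (t₀ : ℝ) (ht₀ : t₀ ∈ Ico (0 : ℝ) T) (xbar : EuclideanSpace ℝ (Fin n))
    (α : ℝ) (hα : 0 < α)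
    (hU : Hsup (𝒰 : Set (EuclideanSpace ℝ (Fin n))) c U t₀ xbar + α ≤ U t₀ xbar)
    (hV : V t₀ xbar ≤ Hinf (𝒱 : Set (EuclideanSpace ℝ (Fin n))) χ V t₀ xbar - α) :
    ∃ δ > (0 : ℝ), t₀ + δ < T ∧
      ∀ t ∈ Icc (max (t₀ - δ) 0) (t₀ + δ), ∀ x ∈ closedBall xbar δ,
        Hsup (𝒰 : Set (EuclideanSpace ℝ (Fin n))) c U t x < U t x ∧
        V t x < Hinf (𝒱 : Set (EuclideanSpace ℝ (Fin n))) χ V t x := by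
  have ht₀I : t₀ ∈ Icc 0 T := Ico_subset_Icc_self ht₀
  obtain ⟨δU, hδU, hU_near⟩ := exists_pos_Hsup_lt_of_Hsup_add_le hUuc hcuc ht₀I hα hU
  obtain ⟨δV, hδV, hV_near⟩ := exists_pos_Hsup_lt_of_Hsup_add_le (W := -V)
    (uniformContinuous_neg.comp_uniformContinuousOn hVuc) hχuc ht₀I hα
    (by rw [Hinf_eq_neg_Hsup_neg] at hV; simp only [Pi.neg_apply]; linarith)
  obtain ⟨m, hm_pos, hmU, hmV, hmT⟩ : ∃ m > 0, m ≤ δU ∧ m ≤ δV ∧ m ≤ T - t₀ :=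
    ⟨min (min δU δV) (T - t₀), lt_min (lt_min hδU hδV) (sub_pos.2 ht₀.2),
      (min_le_left _ _).trans (min_le_left _ _), (min_le_left _ _).trans (min_le_right _ _),
      min_le_right _ _⟩
  refine ⟨m / 2, by positivity, by linarith, fun t ht x hx => ?_⟩
  have htI : t ∈ Icc 0 T := ⟨(le_max_right _ _).trans ht.1, by linarith [ht.2]⟩
  have htt₀ : dist t t₀ < m := by
    rw [Real.dist_eq, abs_sub_lt_iff]
    constructor <;> linarith [ht.2, (le_max_left _ _).trans ht.1]
  have hxx₀ : dist x xbar < m := (mem_closedBall.1 hx).trans_lt (by linarith)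
  refine ⟨hU_near t htI (by linarith) x (by linarith), ?_⟩
  have hV_tx := hV_near t htI (by linarith) x (by linarith)
  rw [Hinf_eq_neg_Hsup_neg]
  simp only [Pi.neg_apply] at hV_tx
  linarith

/-- **Persistence of strict obstacle inequalities in a neighborhood (Step 3 of the key lemma).**
If at `(t₀, xbar) ∈ [0,T)×ℝⁿ` one has `U ≥ H^c_sup U + α` and `V ≤ H^χ_inf V − α` for some `α > 0`,
then there is `δ > 0` with `t₀ + δ < T` such that `U > H^c_sup U` and `V < H^χ_inf V` on
`[(t₀−δ)∨0, t₀+δ] × B̄(xbar, δ)`. -/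
theorem strict_obstacle_persistence {n : ℕ} (hn : 1 ≤ n) (T : ℝ) (hT : 0 < T)
    (𝒰 𝒱 : ConvexCone ℝ (EuclideanSpace ℝ (Fin n)))
    (h𝒰 : (𝒰 : Set (EuclideanSpace ℝ (Fin n))).Nonempty)
    (h𝒱 : (𝒱 : Set (EuclideanSpace ℝ (Fin n))).Nonempty)
    (h𝒰𝒱 : (𝒰 : Set (EuclideanSpace ℝ (Fin n))) ⊆ (𝒱 : Set (EuclideanSpace ℝ (Fin n))))
    (U V : ℝ → EuclideanSpace ℝ (Fin n) → ℝ)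
    (hUbdd : ∃ M : ℝ, ∀ t ∈ Icc (0 : ℝ) T, ∀ x : EuclideanSpace ℝ (Fin n), |U t x| ≤ M)
    (hVbdd : ∃ M : ℝ, ∀ t ∈ Icc (0 : ℝ) T, ∀ x : EuclideanSpace ℝ (Fin n), |V t x| ≤ M)
    (hUuc : UniformContinuousOn (fun p : ℝ × EuclideanSpace ℝ (Fin n) => U p.1 p.2)
      (Icc (0 : ℝ) T ×ˢ univ))
    (hVuc : UniformContinuousOn (fun p : ℝ × EuclideanSpace ℝ (Fin n) => V p.1 p.2)
      (Icc (0 : ℝ) T ×ˢ univ))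
    (c χ : ℝ → EuclideanSpace ℝ (Fin n) → ℝ)
    (hclb : ∃ m : ℝ, ∀ t ∈ Icc (0 : ℝ) T, ∀ ξ ∈ 𝒰, m ≤ c t ξ)
    (hχlb : ∃ m : ℝ, ∀ t ∈ Icc (0 : ℝ) T, ∀ η ∈ 𝒱, m ≤ χ t η)
    (hcuc : UniformContinuousOn (fun p : ℝ × EuclideanSpace ℝ (Fin n) => c p.1 p.2)
      (Icc (0 : ℝ) T ×ˢ (𝒰 : Set (EuclideanSpace ℝ (Fin n)))))
    (hχuc : UniformContinuousOn (fun p : ℝ × EuclideanSpace ℝ (Fin n) => χ p.1 p.2)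
      (Icc (0 : ℝ) T ×ˢ (𝒱 : Set (EuclideanSpace ℝ (Fin n)))))
    (t₀ : ℝ) (ht₀ : t₀ ∈ Ico (0 : ℝ) T) (xbar : EuclideanSpace ℝ (Fin n))
    (α : ℝ) (hα : 0 < α)
    (hU : Hsup (𝒰 : Set (EuclideanSpace ℝ (Fin n))) c U t₀ xbar + α ≤ U t₀ xbar)
    (hV : V t₀ xbar ≤ Hinf (𝒱 : Set (EuclideanSpace ℝ (Fin n))) χ V t₀ xbar - α) :
    ∃ δ > (0 : ℝ), t₀ + δ < T ∧
      ∀ t ∈ Icc (max (t₀ - δ) 0) (t₀ + δ), ∀ x ∈ closedBall xbar δ,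
        Hsup (𝒰 : Set (EuclideanSpace ℝ (Fin n))) c U t x < U t x ∧
        V t x < Hinf (𝒱 : Set (EuclideanSpace ℝ (Fin n))) χ V t x :=
  strict_obstacle_persistence_general T 𝒰 𝒱 U V hUuc hVuc c χ hcuc hχuc t₀ ht₀ xbar α hα hU hV
end
end

section
/- Trace estimate for Lipschitz diffusion coefficients: let n, d ≥ 1, T > 0, and let σ : [0,T]×ℝⁿ → ℝ^{n×d} satisfy ‖σ(t,x) − σ(t,y)‖_F ≤ C₁|x−y| and ‖σ(t,x)‖_F ≤ C₁(1+|x|) for all t ∈ [0,T] and x, y ∈ ℝⁿ, for some constant C₁ > 0. There exists a constant C > 0 depending only on C₁ such that: whenever ε > 0, λ ≥ 0, and X, Y are symmetric n×n matrices with [[X,0],[0,−Y]] ⪯ (2/ε)·[[I,−I],[−I,I]] + λ·I_{2n} in the Loewner order, then for all t ∈ [0,T] and x, y ∈ ℝⁿ: ½ tr( σ(t,x)ᵀ X σ(t,x) − σ(t,y)ᵀ Y σ(t,y) ) ≤ (C/ε)|x−y|² + Cλ(1 + |x|² + |y|²). -/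
open Set Matrix

noncomputable section

/-- Squared Frobenius norm `‖M‖_F² = tr(Mᵀ M)`. -/
def frobNormSq {m k : Type*} [Fintype m] [Fintype k] (M : Matrix m k ℝ) : ℝ :=
  Matrix.trace (Mᵀ * M)

/-- Frobenius norm. -/
def frobNorm {m k : Type*} [Fintype m] [Fintype k] (M : Matrix m k ℝ) : ℝ :=
  Real.sqrt (frobNormSq M)

/-
Conjugating the Loewner inequality by the stacked matrix `S = [σ(t,x); σ(t,y)]` and taking traces
gives `tr(σₓᵀ X σₓ) - tr(σ_yᵀ Y σ_y) ≤ (2/ε)‖σₓ - σ_y‖_F² + λ(‖σₓ‖_F² + ‖σ_y‖_F²)`, since the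
quadratic form of `[[I,-I],[-I,I]]` at `S` is `‖σₓ - σ_y‖_F²`. The Lipschitz and growth bounds,
together with `(1 + a)² ≤ 2(1 + a²)`, then give the estimate with `C = 2 C₁²`.
-/

namespace Matrix

theorem trace_transpose_fromRows_mul_fromBlocks_mul_fromRows {m₁ m₂ k R : Type*} [Fintype m₁]
    [Fintype m₂] [Fintype k] [Semiring R]
    (P : Matrix m₁ m₁ R) (Q : Matrix m₁ m₂ R) (S : Matrix m₂ m₁ R) (U : Matrix m₂ m₂ R)
    (A : Matrix m₁ k R) (B : Matrix m₂ k R) :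
    trace ((fromRows A B)ᵀ * fromBlocks P Q S U * fromRows A B) =
      trace (Aᵀ * P * A) + trace (Aᵀ * Q * B) + trace (Bᵀ * S * A) + trace (Bᵀ * U * B) := by
  rw [transpose_fromRows, Matrix.mul_assoc, fromBlocks_mul_fromRows, fromCols_mul_fromRows]
  simp only [Matrix.mul_add, trace_add, Matrix.mul_assoc]
  abel

end Matrix

section

variable {m k : Type*} [Fintype m] [Fintype k]

theorem frobNormSq_fromRows (A B : Matrix m k ℝ) :
    frobNormSq (fromRows A B) = frobNormSq A + frobNormSq B := by
  rw [frobNormSq, transpose_fromRows, fromCols_mul_fromRows, trace_add]; rfl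

theorem trace_conj_fromRows_fromBlocks_one_neg_one [DecidableEq m] (A B : Matrix m k ℝ) :
    trace ((fromRows A B)ᵀ * (fromBlocks 1 (-1) (-1) 1 : Matrix (m ⊕ m) (m ⊕ m) ℝ) *
      fromRows A B) = frobNormSq (A - B) := by
  rw [trace_transpose_fromRows_mul_fromBlocks_mul_fromRows, frobNormSq, transpose_sub,
    Matrix.sub_mul, Matrix.mul_sub, Matrix.mul_sub]
  simp only [Matrix.mul_one, Matrix.mul_neg, Matrix.neg_mul, trace_neg, trace_sub]
  ring

theorem trace_conj_fromRows_fromBlocks_zero_zero (X Y : Matrix m m ℝ) (A B : Matrix m k ℝ) :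
    trace ((fromRows A B)ᵀ * fromBlocks X 0 0 (-Y) * fromRows A B) =
      trace (Aᵀ * X * A) - trace (Bᵀ * Y * B) := by
  rw [trace_transpose_fromRows_mul_fromBlocks_mul_fromRows]
  simp [sub_eq_add_neg]

theorem trace_conj_sub_le_of_posSemidef [DecidableEq m] {c lam : ℝ} {X Y : Matrix m m ℝ}
    (h : (c • fromBlocks (1 : Matrix m m ℝ) (-1) (-1) 1 + lam • 1 -
      fromBlocks X 0 0 (-Y)).PosSemidef)
    (A B : Matrix m k ℝ) :
    trace (Aᵀ * X * A) - trace (Bᵀ * Y * B) ≤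
      c * frobNormSq (A - B) + lam * (frobNormSq A + frobNormSq B) := by
  have hnonneg := (h.conjTranspose_mul_mul_same (fromRows A B)).trace_nonneg
  rw [conjTranspose_eq_transpose_of_trivial, Matrix.mul_sub, Matrix.mul_add, Matrix.sub_mul,
    Matrix.add_mul, Matrix.mul_smul, Matrix.mul_smul, Matrix.smul_mul, Matrix.smul_mul, trace_sub,
    trace_add, trace_smul, trace_smul, trace_conj_fromRows_fromBlocks_one_neg_one,
    trace_conj_fromRows_fromBlocks_zero_zero, Matrix.mul_one, ← frobNormSq, frobNormSq_fromRows,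
    smul_eq_mul, smul_eq_mul] at hnonneg
  linarith

theorem frobNormSq_le_sq_of_frobNorm_le {M : Matrix m k ℝ} {c : ℝ} (h : frobNorm M ≤ c) :
    frobNormSq M ≤ c ^ 2 :=
  (Real.sqrt_le_iff.1 h).2

end

theorem one_add_sq_add_one_add_sq_le (a b : ℝ) :
    (1 + a) ^ 2 + (1 + b) ^ 2 ≤ 4 * (1 + a ^ 2 + b ^ 2) := by
  linarith [add_sq_le (a := 1) (b := a), add_sq_le (a := 1) (b := b), sq_nonneg a, sq_nonneg b]

theorem trace_estimate_lipschitz_diffusion_general (n d : ℕ)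
    (T : ℝ) (C₁ : ℝ) (hC₁ : 0 < C₁) :
    ∃ C > (0 : ℝ),
      ∀ σm : ℝ → EuclideanSpace ℝ (Fin n) → Matrix (Fin n) (Fin d) ℝ,
        (∀ t ∈ Icc (0 : ℝ) T, ∀ x y : EuclideanSpace ℝ (Fin n),
            frobNorm (σm t x - σm t y) ≤ C₁ * ‖x - y‖) →
        (∀ t ∈ Icc (0 : ℝ) T, ∀ x : EuclideanSpace ℝ (Fin n),
            frobNorm (σm t x) ≤ C₁ * (1 + ‖x‖)) →
        ∀ ε > (0 : ℝ), ∀ lam ≥ (0 : ℝ), ∀ X Y : Matrix (Fin n) (Fin n) ℝ,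
          X.IsSymm → Y.IsSymm →
          ((2 / ε) • (Matrix.fromBlocks (1 : Matrix (Fin n) (Fin n) ℝ) (-1) (-1) 1)
            + lam • (1 : Matrix (Fin n ⊕ Fin n) (Fin n ⊕ Fin n) ℝ)
            - Matrix.fromBlocks X 0 0 (-Y)).PosSemidef →
          ∀ t ∈ Icc (0 : ℝ) T, ∀ x y : EuclideanSpace ℝ (Fin n),
            (1 / 2) * (Matrix.trace ((σm t x)ᵀ * X * σm t x)
                - Matrix.trace ((σm t y)ᵀ * Y * σm t y)) ≤
              (C / ε) * ‖x - y‖ ^ 2 + C * lam * (1 + ‖x‖ ^ 2 + ‖y‖ ^ 2) := by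
  refine ⟨2 * C₁ ^ 2, by positivity, ?_⟩
  intro σm hlip hgrow ε hε lam hlam X Y _ _ hpsd t ht x y
  have hdiff := frobNormSq_le_sq_of_frobNorm_le (hlip t ht x y)
  have hx := frobNormSq_le_sq_of_frobNorm_le (hgrow t ht x)
  have hy := frobNormSq_le_sq_of_frobNorm_le (hgrow t ht y)
  have hgrowth := one_add_sq_add_one_add_sq_le ‖x‖ ‖y‖
  calc (1 / 2) * (trace ((σm t x)ᵀ * X * σm t x) - trace ((σm t y)ᵀ * Y * σm t y))
      ≤ (1 / 2) * (2 / ε * frobNormSq (σm t x - σm t y)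
          + lam * (frobNormSq (σm t x) + frobNormSq (σm t y))) := by
        gcongr; exact trace_conj_sub_le_of_posSemidef hpsd _ _
    _ ≤ (1 / 2) * (2 / ε * (C₁ * ‖x - y‖) ^ 2
          + lam * ((C₁ * (1 + ‖x‖)) ^ 2 + (C₁ * (1 + ‖y‖)) ^ 2)) := by gcongr
    _ = C₁ ^ 2 / ε * ‖x - y‖ ^ 2 + C₁ ^ 2 * lam / 2 * ((1 + ‖x‖) ^ 2 + (1 + ‖y‖) ^ 2) := by ring
    _ ≤ 2 * C₁ ^ 2 / ε * ‖x - y‖ ^ 2 + C₁ ^ 2 * lam / 2 * (4 * (1 + ‖x‖ ^ 2 + ‖y‖ ^ 2)) := by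
        gcongr; linarith [sq_nonneg C₁]
    _ = _ := by ring

/-- **Trace estimate for Lipschitz diffusion coefficients.**
If `σ` is Frobenius–Lipschitz in `x` with constant `C₁` and of linear growth with constant `C₁`,
then there is a constant `C > 0` (depending only on `C₁`) such that whenever
`[[X,0],[0,-Y]] ⪯ (2/ε)[[I,-I],[-I,I]] + λ·I` in the Loewner order one has
`½ tr(σ(t,x)ᵀ X σ(t,x) - σ(t,y)ᵀ Y σ(t,y)) ≤ (C/ε)|x-y|² + Cλ(1+|x|²+|y|²)`. -/
theorem trace_estimate_lipschitz_diffusion (n d : ℕ) (hn : 1 ≤ n) (hd : 1 ≤ d)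
    (T : ℝ) (hT : 0 < T) (C₁ : ℝ) (hC₁ : 0 < C₁) :
    ∃ C > (0 : ℝ),
      ∀ σm : ℝ → EuclideanSpace ℝ (Fin n) → Matrix (Fin n) (Fin d) ℝ,
        (∀ t ∈ Icc (0 : ℝ) T, ∀ x y : EuclideanSpace ℝ (Fin n),
            frobNorm (σm t x - σm t y) ≤ C₁ * ‖x - y‖) →
        (∀ t ∈ Icc (0 : ℝ) T, ∀ x : EuclideanSpace ℝ (Fin n),
            frobNorm (σm t x) ≤ C₁ * (1 + ‖x‖)) →
        ∀ ε > (0 : ℝ), ∀ lam ≥ (0 : ℝ), ∀ X Y : Matrix (Fin n) (Fin n) ℝ,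
          X.IsSymm → Y.IsSymm →
          ((2 / ε) • (Matrix.fromBlocks (1 : Matrix (Fin n) (Fin n) ℝ) (-1) (-1) 1)
            + lam • (1 : Matrix (Fin n ⊕ Fin n) (Fin n ⊕ Fin n) ℝ)
            - Matrix.fromBlocks X 0 0 (-Y)).PosSemidef →
          ∀ t ∈ Icc (0 : ℝ) T, ∀ x y : EuclideanSpace ℝ (Fin n),
            (1 / 2) * (Matrix.trace ((σm t x)ᵀ * X * σm t x)
                - Matrix.trace ((σm t y)ᵀ * Y * σm t y)) ≤
              (C / ε) * ‖x - y‖ ^ 2 + C * lam * (1 + ‖x‖ ^ 2 + ‖y‖ ^ 2) :=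
  trace_estimate_lipschitz_diffusion_general n d T C₁ hC₁
end
end

section
/- Vanishing of the doubling penalty: in the doubling setting, assume in addition that U and V are continuous on I×B̄, and for each ε > 0 let (t_ε,x_ε,y_ε) be a maximum point of Φ_ε over I×B̄×B̄. Then |x_ε − y_ε| → 0 and (1/(2ε))|x_ε − y_ε|² → 0 as ε → 0⁺. -/
/-! Testing the maximality of `(t_ε, x_ε, y_ε)` against the diagonal point `(t_ε, x_ε, x_ε)`
bounds the penalty `|x_ε − y_ε|² / (2ε)` by `g(t_ε, x_ε, y_ε)`, where `g` is continuous on the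
compact set `I × B̄ × B̄` and vanishes on the diagonal `x = y` (the `U`-terms cancel because the
times agree). Boundedness of `g` gives `|x_ε − y_ε|² = O(ε)`, and then uniform continuity of `g`
gives `g(t_ε, x_ε, y_ε) → 0`. -/

open Set Metric Filter Topology

noncomputable section

/-- The doubling-of-variables penalized function
`Φ_ε(t,x,y) = U(t,x) − V(t,y) − (1/(2ε))|x−y|² − θ(|x−x₀|⁴+|y−x₀|⁴) − β(t−t₀)²`. -/
def Phi {n : ℕ} (U V : ℝ → EuclideanSpace ℝ (Fin n) → ℝ)
    (t₀ : ℝ) (x₀ : EuclideanSpace ℝ (Fin n)) (ε θ β : ℝ)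
    (t : ℝ) (x y : EuclideanSpace ℝ (Fin n)) : ℝ :=
  U t x - V t y - (1 / (2 * ε)) * ‖x - y‖ ^ 2
    - θ * (‖x - x₀‖ ^ 4 + ‖y - x₀‖ ^ 4) - β * (t - t₀) ^ 2

open scoped Uniformity

theorem UniformContinuousOn.tendsto_comp_of_dist_tendsto_zero {ι α β : Type*}
    [PseudoMetricSpace α] [PseudoMetricSpace β] {f : α → β} {s : Set α}
    (hf : UniformContinuousOn f s) {l : Filter ι} {p q : ι → α}
    (hp : ∀ᶠ i in l, p i ∈ s) (hq : ∀ᶠ i in l, q i ∈ s)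
    (hpq : Tendsto (fun i => dist (p i) (q i)) l (𝓝 0)) {b : β}
    (hfq : Tendsto (fun i => f (q i)) l (𝓝 b)) : Tendsto (fun i => f (p i)) l (𝓝 b) := by
  have hpair : Tendsto (fun i => (p i, q i)) l (𝓤 α ⊓ 𝓟 (s ×ˢ s)) :=
    tendsto_inf.2 ⟨tendsto_uniformity_iff_dist_tendsto_zero.2 hpq,
      tendsto_principal.2 (hp.and hq)⟩
  refine hfq.congr_dist ?_
  simpa only [Function.comp_def, dist_comm] using
    tendsto_uniformity_iff_dist_tendsto_zero.1 (Tendsto.comp hf hpair)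

theorem tendsto_penalty_of_le_of_continuousOn {X : Type*} [PseudoMetricSpace X]
    {K : Set X} (hK : IsCompact K) {g : X → ℝ} (hg : ContinuousOn g K)
    {p q : ℝ → X} {d : ℝ → ℝ}
    (hpK : ∀ ε > 0, p ε ∈ K) (hqK : ∀ ε > 0, q ε ∈ K) (hgq : ∀ ε > 0, g (q ε) = 0)
    (hdist : ∀ ε > 0, dist (p ε) (q ε) ≤ d ε)
    (hpen : ∀ ε > 0, (1 / (2 * ε)) * d ε ^ 2 ≤ g (p ε)) :
    Tendsto d (𝓝[>] 0) (𝓝 0) ∧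
    Tendsto (fun ε => (1 / (2 * ε)) * d ε ^ 2) (𝓝[>] 0) (𝓝 0) := by
  obtain ⟨C, hC⟩ := hK.exists_bound_of_continuousOn hg
  have hd0 : ∀ ε > 0, 0 ≤ d ε := fun ε hε => dist_nonneg.trans (hdist ε hε)
  have hsq : ∀ ε > 0, d ε ≤ √(2 * C * ε) := by
    intro ε hε
    rw [← Real.sqrt_sq (hd0 ε hε)]
    refine Real.sqrt_le_sqrt ?_
    have := (hpen ε hε).trans ((le_abs_self _).trans (hC _ (hpK ε hε)))
    rw [div_mul_eq_mul_div, one_mul, div_le_iff₀ (by positivity)] at this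
    linarith
  have hd : Tendsto d (𝓝[>] 0) (𝓝 0) := by
    refine squeeze_zero' (eventually_nhdsWithin_of_forall hd0)
      (eventually_nhdsWithin_of_forall hsq) ?_
    have : Continuous (fun ε : ℝ => √(2 * C * ε)) := by fun_prop
    simpa using (this.tendsto 0).mono_left nhdsWithin_le_nhds
  have hgp : Tendsto (fun ε => g (p ε)) (𝓝[>] 0) (𝓝 0) := by
    refine (hK.uniformContinuousOn_of_continuous hg).tendsto_comp_of_dist_tendsto_zero
      (eventually_nhdsWithin_of_forall hpK) (eventually_nhdsWithin_of_forall hqK)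
      (squeeze_zero' (.of_forall fun ε => dist_nonneg) (eventually_nhdsWithin_of_forall hdist) hd)
      (tendsto_const_nhds.congr' ?_)
    filter_upwards [self_mem_nhdsWithin] with ε hε using (hgq ε hε).symm
  refine ⟨hd, squeeze_zero' ?_ (eventually_nhdsWithin_of_forall hpen) hgp⟩
  filter_upwards [self_mem_nhdsWithin] with ε (hε : 0 < ε)
  positivity

def doublingGap {E : Type*} [SeminormedAddCommGroup E] (V : ℝ → E → ℝ) (x₀ : E) (θ : ℝ)
    (q : ℝ × E × E) : ℝ :=
  V q.1 q.2.1 - V q.1 q.2.2 + θ * (‖q.2.1 - x₀‖ ^ 4 - ‖q.2.2 - x₀‖ ^ 4)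

theorem doublingGap_diag {E : Type*} [SeminormedAddCommGroup E] (V : ℝ → E → ℝ) (x₀ : E)
    (θ t : ℝ) (x : E) : doublingGap V x₀ θ (t, x, x) = 0 := by
  simp [doublingGap]

theorem ContinuousOn.doublingGap {E : Type*} [SeminormedAddCommGroup E] {V : ℝ → E → ℝ}
    {I : Set ℝ} {B : Set E} (hV : ContinuousOn (fun p : ℝ × E => V p.1 p.2) (I ×ˢ B))
    (x₀ : E) (θ : ℝ) : ContinuousOn (doublingGap V x₀ θ) (I ×ˢ B ×ˢ B) := by
  have hVx : ContinuousOn (fun q : ℝ × E × E => V q.1 q.2.1) (I ×ˢ B ×ˢ B) :=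
    hV.comp (f := fun q : ℝ × E × E => (q.1, q.2.1)) (by fun_prop) fun _ hq => ⟨hq.1, hq.2.1⟩
  have hVy : ContinuousOn (fun q : ℝ × E × E => V q.1 q.2.2) (I ×ˢ B ×ˢ B) :=
    hV.comp (f := fun q : ℝ × E × E => (q.1, q.2.2)) (by fun_prop) fun _ hq => ⟨hq.1, hq.2.2⟩
  exact (hVx.sub hVy).add (by fun_prop)

theorem Phi_sub_Phi_diag {n : ℕ} (U V : ℝ → EuclideanSpace ℝ (Fin n) → ℝ)
    (t₀ : ℝ) (x₀ : EuclideanSpace ℝ (Fin n)) (ε θ β t : ℝ) (x y : EuclideanSpace ℝ (Fin n)) :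
    Phi U V t₀ x₀ ε θ β t x y - Phi U V t₀ x₀ ε θ β t x x =
      doublingGap V x₀ θ (t, x, y) - (1 / (2 * ε)) * ‖x - y‖ ^ 2 := by
  simp only [Phi, doublingGap, sub_self, norm_zero]
  ring

theorem doubling_penalty_vanishes_general {n : ℕ} (a bI : ℝ)
    (z : EuclideanSpace ℝ (Fin n)) (R : ℝ)
    (t₀ : ℝ) (x₀ : EuclideanSpace ℝ (Fin n))
    (θ β : ℝ)
    (U V : ℝ → EuclideanSpace ℝ (Fin n) → ℝ)
    (hVcont : ContinuousOn (fun p : ℝ × EuclideanSpace ℝ (Fin n) => V p.1 p.2)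
      (Icc a bI ×ˢ closedBall z R))
    (tsel : ℝ → ℝ) (xsel ysel : ℝ → EuclideanSpace ℝ (Fin n))
    (hsel : ∀ ε > (0 : ℝ), tsel ε ∈ Icc a bI ∧ xsel ε ∈ closedBall z R ∧
      ysel ε ∈ closedBall z R ∧
      ∀ t ∈ Icc a bI, ∀ x ∈ closedBall z R, ∀ y ∈ closedBall z R,
        Phi U V t₀ x₀ ε θ β t x y ≤ Phi U V t₀ x₀ ε θ β (tsel ε) (xsel ε) (ysel ε)) :
    Tendsto (fun ε => ‖xsel ε - ysel ε‖) (𝓝[>] (0 : ℝ)) (𝓝 0) ∧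
    Tendsto (fun ε => (1 / (2 * ε)) * ‖xsel ε - ysel ε‖ ^ 2) (𝓝[>] (0 : ℝ)) (𝓝 0) := by
  refine tendsto_penalty_of_le_of_continuousOn
    (isCompact_Icc.prod ((isCompact_closedBall z R).prod (isCompact_closedBall z R)))
    (hVcont.doublingGap x₀ θ) (p := fun ε => (tsel ε, xsel ε, ysel ε))
    (q := fun ε => (tsel ε, xsel ε, xsel ε)) (fun ε hε => ?_) (fun ε hε => ?_)
    (fun ε _ => doublingGap_diag V x₀ θ _ _) (fun ε _ => ?_) (fun ε hε => ?_)
  · obtain ⟨ht, hx, hy, -⟩ := hsel ε hε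
    exact ⟨ht, hx, hy⟩
  · obtain ⟨ht, hx, -, -⟩ := hsel ε hε
    exact ⟨ht, hx, hx⟩
  · simp [dist_eq_norm, norm_sub_rev]
  · obtain ⟨ht, hx, -, hmax⟩ := hsel ε hε
    have := Phi_sub_Phi_diag U V t₀ x₀ ε θ β (tsel ε) (xsel ε) (ysel ε)
    linarith [hmax _ ht _ hx _ hx]

/-- **Vanishing of the doubling penalty.** If `U, V` are continuous on the compact set
`I × B̄` and, for each `ε > 0`, `(t_ε, x_ε, y_ε)` maximizes `Φ_ε` over `I × B̄ × B̄`, then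
`|x_ε − y_ε| → 0` and `(1/(2ε))|x_ε − y_ε|² → 0` as `ε → 0⁺`. -/
theorem doubling_penalty_vanishes {n : ℕ} (a bI : ℝ) (hab : a ≤ bI)
    (z : EuclideanSpace ℝ (Fin n)) (R : ℝ) (hR : 0 ≤ R)
    (t₀ : ℝ) (x₀ : EuclideanSpace ℝ (Fin n))
    (ht₀ : t₀ ∈ Icc a bI) (hx₀ : x₀ ∈ closedBall z R)
    (θ β : ℝ) (hθ : 0 < θ) (hβ : 0 < β)
    (U V : ℝ → EuclideanSpace ℝ (Fin n) → ℝ)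
    (hUbdd : ∃ M : ℝ, ∀ t ∈ Icc a bI, ∀ x ∈ closedBall z R, |U t x| ≤ M)
    (hVbdd : ∃ M : ℝ, ∀ t ∈ Icc a bI, ∀ x ∈ closedBall z R, |V t x| ≤ M)
    (hUcont : ContinuousOn (fun p : ℝ × EuclideanSpace ℝ (Fin n) => U p.1 p.2)
      (Icc a bI ×ˢ closedBall z R))
    (hVcont : ContinuousOn (fun p : ℝ × EuclideanSpace ℝ (Fin n) => V p.1 p.2)
      (Icc a bI ×ˢ closedBall z R))
    (tsel : ℝ → ℝ) (xsel ysel : ℝ → EuclideanSpace ℝ (Fin n))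
    (hsel : ∀ ε > (0 : ℝ), tsel ε ∈ Icc a bI ∧ xsel ε ∈ closedBall z R ∧
      ysel ε ∈ closedBall z R ∧
      ∀ t ∈ Icc a bI, ∀ x ∈ closedBall z R, ∀ y ∈ closedBall z R,
        Phi U V t₀ x₀ ε θ β t x y ≤ Phi U V t₀ x₀ ε θ β (tsel ε) (xsel ε) (ysel ε)) :
    Tendsto (fun ε => ‖xsel ε - ysel ε‖) (𝓝[>] (0 : ℝ)) (𝓝 0) ∧
    Tendsto (fun ε => (1 / (2 * ε)) * ‖xsel ε - ysel ε‖ ^ 2) (𝓝[>] (0 : ℝ)) (𝓝 0) :=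
  doubling_penalty_vanishes_general a bI z R t₀ x₀ θ β U V hVcont tsel xsel ysel hsel
end
end

section
/- Convergence of doubling maximizers: in the doubling setting, assume U and V are continuous on I×B̄ and that (t₀,x₀) is a maximum point of (t,x) ↦ U(t,x) − V(t,x) over I×B̄. For each ε > 0 let (t_ε,x_ε,y_ε) be a maximum point of Φ_ε over I×B̄×B̄. Then for every ε > 0: U(t₀,x₀) − V(t₀,x₀) ≤ Φ_ε(t_ε,x_ε,y_ε) ≤ U(t_ε,x_ε) − V(t_ε,y_ε); and as ε → 0⁺: (t_ε,x_ε,y_ε) → (t₀,x₀,x₀), θ(|x_ε−x₀|⁴ + |y_ε−x₀|⁴) → 0, and U(t_ε,x_ε) − V(t_ε,y_ε) → U(t₀,x₀) − V(t₀,x₀). -/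
/-!
Comparing `Φ_ε` at its maximizer with its value `U(t₀,x₀) − V(t₀,x₀)` at `(t₀, x₀, x₀)` bounds
all three penalty terms by the gap
`U(t_ε,x_ε) − V(t_ε,y_ε) − (U − V)(t₀,x₀)`, while the maximality of `(t₀,x₀)` for `U − V` bounds
this gap by `V(t_ε,x_ε) − V(t_ε,y_ε)`. As `V` is bounded, the first penalty gives
`|x_ε − y_ε|² ≤ 4 sup |V| ε`; uniform continuity of `V` on the compact set `I × B̄` then sends
the gap, and with it every penalty, to `0`.
-/

open Set Metric Filter Topology

noncomputable section

open scoped Uniformity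

theorem tendsto_zero_of_mul_pow_le {α : Type*} {l : Filter α} {d g : α → ℝ} {c : ℝ} {k : ℕ}
    (hc : 0 < c) (hk : k ≠ 0) (hd : ∀ a, 0 ≤ d a) (h : ∀ᶠ a in l, c * d a ^ k ≤ g a)
    (hg : Tendsto g l (𝓝 0)) : Tendsto d l (𝓝 0) := by
  have hdk : Tendsto (fun a => d a ^ k) l (𝓝 0) :=
    squeeze_zero' (.of_forall fun a => pow_nonneg (hd a) k)
      (h.mono fun a ha => (le_div_iff₀' hc).2 ha) (by simpa using hg.div_const c)
  have hk' : (k⁻¹ : ℝ) ≠ 0 := by positivity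
  simpa [Real.zero_rpow hk', Real.pow_rpow_inv_natCast (hd _) hk] using
    hdk.rpow_const (p := (k⁻¹ : ℝ)) (.inr (by positivity))

theorem IsCompact.tendsto_sub_comp_of_continuousOn {α X E : Type*} [PseudoMetricSpace X]
    [SeminormedAddCommGroup E] {l : Filter α} {K : Set X} {f : X → E} {u v : α → X}
    (hK : IsCompact K) (hf : ContinuousOn f K) (hu : ∀ᶠ a in l, u a ∈ K)
    (hv : ∀ᶠ a in l, v a ∈ K) (huv : Tendsto (fun a => dist (u a) (v a)) l (𝓝 0)) :
    Tendsto (fun a => f (u a) - f (v a)) l (𝓝 0) := by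
  have hpair : Tendsto (fun a => (u a, v a)) l (𝓤 X ⊓ 𝓟 (K ×ˢ K)) :=
    tendsto_inf.2 ⟨tendsto_uniformity_iff_dist_tendsto_zero.2 huv, tendsto_principal.2 (hu.and hv)⟩
  have h := tendsto_uniformity_iff_dist_tendsto_zero.1
    (Tendsto.comp (hK.uniformContinuousOn_of_continuous hf) hpair)
  simp only [Function.comp_def, dist_eq_norm] at h
  exact tendsto_zero_iff_norm_tendsto_zero.2 h

theorem tendsto_of_tendsto_penalties {α E : Type*} [SeminormedAddCommGroup E] {l : Filter α}
    {t : α → ℝ} {x y : α → E} {t₀ θ β : ℝ} {x₀ : E} (hθ : 0 < θ) (hβ : 0 < β)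
    (hxy : Tendsto (fun a => θ * (‖x a - x₀‖ ^ 4 + ‖y a - x₀‖ ^ 4)) l (𝓝 0))
    (ht : Tendsto (fun a => β * (t a - t₀) ^ 2) l (𝓝 0)) :
    Tendsto (fun a => (t a, x a, y a)) l (𝓝 (t₀, x₀, x₀)) := by
  have hE (w : α → E) (hw : ∀ a, ‖w a - x₀‖ ^ 4 ≤ ‖x a - x₀‖ ^ 4 + ‖y a - x₀‖ ^ 4) :
      Tendsto w l (𝓝 x₀) := by
    refine tendsto_iff_dist_tendsto_zero.2 (tendsto_zero_of_mul_pow_le hθ four_ne_zero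
      (fun _ => dist_nonneg) (.of_forall fun a => ?_) hxy)
    rw [dist_eq_norm]
    exact mul_le_mul_of_nonneg_left (hw a) hθ.le
  have hℝ : Tendsto t l (𝓝 t₀) := by
    refine tendsto_iff_dist_tendsto_zero.2 (tendsto_zero_of_mul_pow_le hβ two_ne_zero
      (fun _ => dist_nonneg) (.of_forall fun a => ?_) ht)
    rw [Real.dist_eq, sq_abs]
  exact hℝ.prodMk_nhds ((hE x fun _ => le_add_of_nonneg_right (by positivity)).prodMk_nhds
    (hE y fun _ => le_add_of_nonneg_left (by positivity)))

section Pointwise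

variable {n : ℕ} {U V : ℝ → EuclideanSpace ℝ (Fin n) → ℝ} {t₀ : ℝ}
  {x₀ : EuclideanSpace ℝ (Fin n)} {ε θ β t : ℝ} {x y : EuclideanSpace ℝ (Fin n)}

theorem Phi_self : Phi U V t₀ x₀ ε θ β t₀ x₀ x₀ = U t₀ x₀ - V t₀ x₀ := by
  simp [Phi]

theorem Phi_le_sub (hε : 0 ≤ ε) (hθ : 0 ≤ θ) (hβ : 0 ≤ β) :
    Phi U V t₀ x₀ ε θ β t x y ≤ U t x - V t y := by
  have h₁ : 0 ≤ 1 / (2 * ε) * ‖x - y‖ ^ 2 := by positivity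
  have h₂ : 0 ≤ θ * (‖x - x₀‖ ^ 4 + ‖y - x₀‖ ^ 4) := by positivity
  have h₃ : 0 ≤ β * (t - t₀) ^ 2 := by positivity
  unfold Phi
  linarith

theorem penalties_le_of_le_Phi (hΦ : U t₀ x₀ - V t₀ x₀ ≤ Phi U V t₀ x₀ ε θ β t x y) :
    1 / (2 * ε) * ‖x - y‖ ^ 2 + θ * (‖x - x₀‖ ^ 4 + ‖y - x₀‖ ^ 4) + β * (t - t₀) ^ 2
      ≤ U t x - V t y - (U t₀ x₀ - V t₀ x₀) := by
  unfold Phi at hΦ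
  linarith

theorem norm_sub_sq_le_of_le_Phi {M : ℝ} (hε : 0 < ε) (hθ : 0 ≤ θ) (hβ : 0 ≤ β)
    (hΦ : U t₀ x₀ - V t₀ x₀ ≤ Phi U V t₀ x₀ ε θ β t x y)
    (hmax : U t x - V t x ≤ U t₀ x₀ - V t₀ x₀) (hx : |V t x| ≤ M) (hy : |V t y| ≤ M) :
    ‖x - y‖ ^ 2 ≤ 4 * M * ε := by
  have hpen := penalties_le_of_le_Phi hΦ
  have h₂ : 0 ≤ θ * (‖x - x₀‖ ^ 4 + ‖y - x₀‖ ^ 4) := by positivity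
  have h₃ : 0 ≤ β * (t - t₀) ^ 2 := by positivity
  have hdiv : ‖x - y‖ ^ 2 / (2 * ε) ≤ 2 * M := by
    rw [div_eq_inv_mul, ← one_div]
    linarith [abs_le.1 hx, abs_le.1 hy]
  linarith [(div_le_iff₀ (by positivity)).1 hdiv]

end Pointwise

theorem doubling_maximizers_converge_general {n : ℕ} (a bI : ℝ)
    (z : EuclideanSpace ℝ (Fin n)) (R : ℝ)
    (t₀ : ℝ) (x₀ : EuclideanSpace ℝ (Fin n))
    (ht₀ : t₀ ∈ Icc a bI) (hx₀ : x₀ ∈ closedBall z R)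
    (θ β : ℝ) (hθ : 0 < θ) (hβ : 0 < β)
    (U V : ℝ → EuclideanSpace ℝ (Fin n) → ℝ)
    (hVbdd : ∃ M : ℝ, ∀ t ∈ Icc a bI, ∀ x ∈ closedBall z R, |V t x| ≤ M)
    (hVcont : ContinuousOn (fun p : ℝ × EuclideanSpace ℝ (Fin n) => V p.1 p.2)
      (Icc a bI ×ˢ closedBall z R))
    (hmax₀ : ∀ t ∈ Icc a bI, ∀ x ∈ closedBall z R, U t x - V t x ≤ U t₀ x₀ - V t₀ x₀)
    (tsel : ℝ → ℝ) (xsel ysel : ℝ → EuclideanSpace ℝ (Fin n))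
    (hsel : ∀ ε > (0 : ℝ), tsel ε ∈ Icc a bI ∧ xsel ε ∈ closedBall z R ∧
      ysel ε ∈ closedBall z R ∧
      ∀ t ∈ Icc a bI, ∀ x ∈ closedBall z R, ∀ y ∈ closedBall z R,
        Phi U V t₀ x₀ ε θ β t x y ≤ Phi U V t₀ x₀ ε θ β (tsel ε) (xsel ε) (ysel ε)) :
    (∀ ε > (0 : ℝ),
      U t₀ x₀ - V t₀ x₀ ≤ Phi U V t₀ x₀ ε θ β (tsel ε) (xsel ε) (ysel ε) ∧
      Phi U V t₀ x₀ ε θ β (tsel ε) (xsel ε) (ysel ε) ≤ U (tsel ε) (xsel ε) - V (tsel ε) (ysel ε)) ∧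
    Tendsto (fun ε => (tsel ε, xsel ε, ysel ε)) (𝓝[>] (0 : ℝ)) (𝓝 (t₀, x₀, x₀)) ∧
    Tendsto (fun ε => θ * (‖xsel ε - x₀‖ ^ 4 + ‖ysel ε - x₀‖ ^ 4)) (𝓝[>] (0 : ℝ)) (𝓝 0) ∧
    Tendsto (fun ε => U (tsel ε) (xsel ε) - V (tsel ε) (ysel ε)) (𝓝[>] (0 : ℝ))
      (𝓝 (U t₀ x₀ - V t₀ x₀)) := by
  obtain ⟨M, hM⟩ := hVbdd
  have hΦ : ∀ ε > (0 : ℝ),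
      U t₀ x₀ - V t₀ x₀ ≤ Phi U V t₀ x₀ ε θ β (tsel ε) (xsel ε) (ysel ε) :=
    fun ε hε => Phi_self ▸ (hsel ε hε).2.2.2 t₀ ht₀ x₀ hx₀ x₀ hx₀
  have hmem : ∀ᶠ ε in 𝓝[>] (0 : ℝ), 0 < ε ∧ tsel ε ∈ Icc a bI ∧
      xsel ε ∈ closedBall z R ∧ ysel ε ∈ closedBall z R :=
    eventually_mem_nhdsWithin.mono fun ε hε =>
      ⟨hε, (hsel ε hε).1, (hsel ε hε).2.1, (hsel ε hε).2.2.1⟩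
  have hxy : Tendsto (fun ε => dist (xsel ε) (ysel ε)) (𝓝[>] 0) (𝓝 0) := by
    refine tendsto_zero_of_mul_pow_le one_pos two_ne_zero (fun _ => dist_nonneg)
      (hmem.mono fun ε ⟨hε, ht, hx, hy⟩ => ?_) (g := fun ε => 4 * M * ε)
      (tendsto_nhdsWithin_of_tendsto_nhds ((continuous_const_mul _).tendsto' 0 0 (mul_zero _)))
    rw [one_mul, dist_eq_norm]
    exact norm_sub_sq_le_of_le_Phi hε hθ.le hβ.le (hΦ ε hε) (hmax₀ _ ht _ hx)
      (hM _ ht _ hx) (hM _ ht _ hy)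
  have hV : Tendsto (fun ε => V (tsel ε) (xsel ε) - V (tsel ε) (ysel ε)) (𝓝[>] 0) (𝓝 0) :=
    (isCompact_Icc.prod (isCompact_closedBall z R)).tendsto_sub_comp_of_continuousOn hVcont
      (u := fun ε => (tsel ε, xsel ε)) (v := fun ε => (tsel ε, ysel ε))
      (hmem.mono fun _ h => ⟨h.2.1, h.2.2.1⟩) (hmem.mono fun _ h => ⟨h.2.1, h.2.2.2⟩)
      (by simpa only [dist_prod_same_left] using hxy)
  have hθnonneg (ε : ℝ) : 0 ≤ θ * (‖xsel ε - x₀‖ ^ 4 + ‖ysel ε - x₀‖ ^ 4) := by positivity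
  have hβnonneg (ε : ℝ) : 0 ≤ β * (tsel ε - t₀) ^ 2 := by positivity
  have hpen : ∀ᶠ ε in 𝓝[>] 0,
      θ * (‖xsel ε - x₀‖ ^ 4 + ‖ysel ε - x₀‖ ^ 4) + β * (tsel ε - t₀) ^ 2
        ≤ U (tsel ε) (xsel ε) - V (tsel ε) (ysel ε) - (U t₀ x₀ - V t₀ x₀) :=
    hmem.mono fun ε ⟨hε, _⟩ => by
      have : 0 ≤ 1 / (2 * ε) * ‖xsel ε - ysel ε‖ ^ 2 := by positivity
      linarith [penalties_le_of_le_Phi (hΦ ε hε)]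
  have hgap : Tendsto
      (fun ε => U (tsel ε) (xsel ε) - V (tsel ε) (ysel ε) - (U t₀ x₀ - V t₀ x₀)) (𝓝[>] 0) (𝓝 0) :=
    squeeze_zero' (hpen.mono fun ε h => by linarith [hθnonneg ε, hβnonneg ε])
      (hmem.mono fun ε ⟨_, ht, hx, _⟩ => by linarith [hmax₀ _ ht _ hx]) hV
  have hθ' := squeeze_zero' (.of_forall hθnonneg)
    (hpen.mono fun ε h => by linarith [hβnonneg ε]) hgap
  have hβ' := squeeze_zero' (.of_forall hβnonneg)
    (hpen.mono fun ε h => by linarith [hθnonneg ε]) hgap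
  exact ⟨fun ε hε => ⟨hΦ ε hε, Phi_le_sub hε.le hθ.le hβ.le⟩,
    tendsto_of_tendsto_penalties hθ hβ hθ' hβ', hθ',
    by simpa using hgap.add_const (U t₀ x₀ - V t₀ x₀)⟩

/-- **Convergence of doubling maximizers.** If `U, V` are continuous on `I × B̄`, `(t₀,x₀)`
maximizes `U − V` over `I × B̄`, and for each `ε > 0` the point `(t_ε, x_ε, y_ε)` maximizes
`Φ_ε` over `I × B̄ × B̄`, then `U(t₀,x₀) − V(t₀,x₀) ≤ Φ_ε(t_ε,x_ε,y_ε) ≤ U(t_ε,x_ε) − V(t_ε,y_ε)`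
for every `ε > 0`, and, as `ε → 0⁺`, `(t_ε,x_ε,y_ε) → (t₀,x₀,x₀)`,
`θ(|x_ε−x₀|⁴ + |y_ε−x₀|⁴) → 0` and `U(t_ε,x_ε) − V(t_ε,y_ε) → U(t₀,x₀) − V(t₀,x₀)`. -/
theorem doubling_maximizers_converge {n : ℕ} (a bI : ℝ) (hab : a ≤ bI)
    (z : EuclideanSpace ℝ (Fin n)) (R : ℝ) (hR : 0 ≤ R)
    (t₀ : ℝ) (x₀ : EuclideanSpace ℝ (Fin n))
    (ht₀ : t₀ ∈ Icc a bI) (hx₀ : x₀ ∈ closedBall z R)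
    (θ β : ℝ) (hθ : 0 < θ) (hβ : 0 < β)
    (U V : ℝ → EuclideanSpace ℝ (Fin n) → ℝ)
    (hUbdd : ∃ M : ℝ, ∀ t ∈ Icc a bI, ∀ x ∈ closedBall z R, |U t x| ≤ M)
    (hVbdd : ∃ M : ℝ, ∀ t ∈ Icc a bI, ∀ x ∈ closedBall z R, |V t x| ≤ M)
    (hUcont : ContinuousOn (fun p : ℝ × EuclideanSpace ℝ (Fin n) => U p.1 p.2)
      (Icc a bI ×ˢ closedBall z R))
    (hVcont : ContinuousOn (fun p : ℝ × EuclideanSpace ℝ (Fin n) => V p.1 p.2)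
      (Icc a bI ×ˢ closedBall z R))
    (hmax₀ : ∀ t ∈ Icc a bI, ∀ x ∈ closedBall z R, U t x - V t x ≤ U t₀ x₀ - V t₀ x₀)
    (tsel : ℝ → ℝ) (xsel ysel : ℝ → EuclideanSpace ℝ (Fin n))
    (hsel : ∀ ε > (0 : ℝ), tsel ε ∈ Icc a bI ∧ xsel ε ∈ closedBall z R ∧
      ysel ε ∈ closedBall z R ∧
      ∀ t ∈ Icc a bI, ∀ x ∈ closedBall z R, ∀ y ∈ closedBall z R,
        Phi U V t₀ x₀ ε θ β t x y ≤ Phi U V t₀ x₀ ε θ β (tsel ε) (xsel ε) (ysel ε)) :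
    (∀ ε > (0 : ℝ),
      U t₀ x₀ - V t₀ x₀ ≤ Phi U V t₀ x₀ ε θ β (tsel ε) (xsel ε) (ysel ε) ∧
      Phi U V t₀ x₀ ε θ β (tsel ε) (xsel ε) (ysel ε) ≤ U (tsel ε) (xsel ε) - V (tsel ε) (ysel ε)) ∧
    Tendsto (fun ε => (tsel ε, xsel ε, ysel ε)) (𝓝[>] (0 : ℝ)) (𝓝 (t₀, x₀, x₀)) ∧
    Tendsto (fun ε => θ * (‖xsel ε - x₀‖ ^ 4 + ‖ysel ε - x₀‖ ^ 4)) (𝓝[>] (0 : ℝ)) (𝓝 0) ∧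
    Tendsto (fun ε => U (tsel ε) (xsel ε) - V (tsel ε) (ysel ε)) (𝓝[>] (0 : ℝ))
      (𝓝 (U t₀ x₀ - V t₀ x₀)) :=
  doubling_maximizers_converge_general a bI z R t₀ x₀ ht₀ hx₀ θ β hθ hβ U V hVbdd hVcont hmax₀ tsel
    xsel ysel hsel
end
end

section
/- The maximizing time stays away from the terminal time (Step 2 of the uniqueness proof): in the doubling setting with I = [a,T] for some 0 ≤ a < T, assume in addition that U(T,x) = V(T,x) = G(x) for all x ∈ B̄, where G : B̄ → ℝ is continuous, that t₀ < T, and that U(t₀,x₀) − V(t₀,x₀) = η > 0. Then there exists ε₀ > 0 such that for every 0 < ε < ε₀, every maximum point (t_ε,x_ε,y_ε) of Φ_ε over I×B̄×B̄ satisfies t_ε < T. -/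
/- If the maximum of `Φ_ε` were attained at `t = T`, comparing with `Φ_ε(t₀,x₀,x₀) = η` and
discarding the nonnegative penalties would give `η + |x−y|²/(2ε) ≤ G(x) − G(y)`. Boundedness of
`G` then forces `|x−y|² = O(ε)`, and uniform continuity of `G` makes `G(x) − G(y) < η` for small
`ε`, a contradiction. -/

open Set Metric

noncomputable section

open Filter Topology

theorem UniformContinuousOn.eventually_sub_lt_add_dist_sq_div {α : Type*} [PseudoMetricSpace α]
    {s : Set α} {G : α → ℝ} {M : ℝ} (hG : UniformContinuousOn G s)
    (hM : ∀ x ∈ s, |G x| ≤ M) {η : ℝ} (hη : 0 < η) :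
    ∀ᶠ ε in 𝓝[>] (0 : ℝ), ∀ x ∈ s, ∀ y ∈ s, G x - G y < η + dist x y ^ 2 / (2 * ε) := by
  obtain ⟨δ, hδ, hδG⟩ := Metric.uniformContinuousOn_iff.mp hG η hη
  have hsmall : ∀ᶠ ε in 𝓝[>] (0 : ℝ), 4 * M * ε < δ ^ 2 :=
    nhdsWithin_le_nhds <| (continuous_const.mul continuous_id).tendsto' 0 0 (by simp)
      |>.eventually (gt_mem_nhds (by positivity))
  filter_upwards [self_mem_nhdsWithin, hsmall] with ε (hε : 0 < ε) hMε x hx y hy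
  by_contra! hge
  have hpen : 0 ≤ dist x y ^ 2 / (2 * ε) := by positivity
  have hGxy : G x - G y ≤ 2 * M := by linarith [(abs_le.mp (hM x hx)).2, (abs_le.mp (hM y hy)).1]
  have hdist_sq : dist x y ^ 2 < δ ^ 2 := by
    have : dist x y ^ 2 ≤ 2 * ε * (2 * M - η) := by
      rw [← div_le_iff₀' (by positivity)]
      linarith
    nlinarith
  have hclose := hδG x hx y hy (lt_of_pow_lt_pow_left₀ 2 hδ.le hdist_sq)
  linarith [(abs_lt.mp (Real.dist_eq (G x) (G y) ▸ hclose)).2]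

section Phi

variable {n : ℕ} (U V : ℝ → EuclideanSpace ℝ (Fin n) → ℝ) (t₀ : ℝ) (x₀ : EuclideanSpace ℝ (Fin n))
  (ε : ℝ)

theorem Phi_self_center (θ β : ℝ) : Phi U V t₀ x₀ ε θ β t₀ x₀ x₀ = U t₀ x₀ - V t₀ x₀ := by
  simp [Phi]

theorem Phi_le_sub_sub_dist_sq_div {θ β : ℝ} (hθ : 0 ≤ θ) (hβ : 0 ≤ β) (t : ℝ)
    (x y : EuclideanSpace ℝ (Fin n)) :
    Phi U V t₀ x₀ ε θ β t x y ≤ U t x - V t y - dist x y ^ 2 / (2 * ε) := by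
  have : 0 ≤ θ * (‖x - x₀‖ ^ 4 + ‖y - x₀‖ ^ 4) + β * (t - t₀) ^ 2 := by positivity
  rw [Phi, dist_eq_norm, one_div_mul_eq_div]
  linarith

end Phi

theorem doubling_maximizer_time_lt_terminal_general {n : ℕ} (a T : ℝ)
    (z : EuclideanSpace ℝ (Fin n)) (R : ℝ)
    (t₀ : ℝ) (x₀ : EuclideanSpace ℝ (Fin n))
    (ht₀ : t₀ ∈ Icc a T) (hx₀ : x₀ ∈ closedBall z R)
    (θ β : ℝ) (hθ : 0 < θ) (hβ : 0 < β)
    (U V : ℝ → EuclideanSpace ℝ (Fin n) → ℝ)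
    (G : EuclideanSpace ℝ (Fin n) → ℝ) (hG : ContinuousOn G (closedBall z R))
    (hUT : ∀ x ∈ closedBall z R, U T x = G x)
    (hVT : ∀ x ∈ closedBall z R, V T x = G x)
    (η : ℝ) (hη : 0 < η) (hη' : U t₀ x₀ - V t₀ x₀ = η) :
    ∃ ε₀ > (0 : ℝ), ∀ ε : ℝ, 0 < ε → ε < ε₀ →
      ∀ tε : ℝ, ∀ xε yε : EuclideanSpace ℝ (Fin n),
        tε ∈ Icc a T → xε ∈ closedBall z R → yε ∈ closedBall z R →
        (∀ t ∈ Icc a T, ∀ x ∈ closedBall z R, ∀ y ∈ closedBall z R,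
          Phi U V t₀ x₀ ε θ β t x y ≤ Phi U V t₀ x₀ ε θ β tε xε yε) →
        tε < T := by
  have hK := isCompact_closedBall z R
  obtain ⟨M, hM⟩ := hK.exists_bound_of_continuousOn hG
  have hsep := (hK.uniformContinuousOn_of_continuous hG).eventually_sub_lt_add_dist_sq_div
    (fun x hx ↦ (Real.norm_eq_abs (G x)).symm ▸ hM x hx) hη
  obtain ⟨ε₀, hε₀, hε₀sep⟩ := (nhdsGT_basis 0).eventually_iff.mp hsep
  refine ⟨ε₀, hε₀, fun ε hε hεε₀ tε xε yε htε hxε hyε hmax ↦ ?_⟩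
  by_contra! hTtε
  obtain rfl : tε = T := le_antisymm htε.2 hTtε
  have hcompare : η ≤ G xε - G yε - dist xε yε ^ 2 / (2 * ε) :=
    calc η = Phi U V t₀ x₀ ε θ β t₀ x₀ x₀ := by rw [Phi_self_center, hη']
      _ ≤ Phi U V t₀ x₀ ε θ β tε xε yε := hmax t₀ ht₀ x₀ hx₀ x₀ hx₀
      _ ≤ G xε - G yε - dist xε yε ^ 2 / (2 * ε) := by
        rw [← hUT xε hxε, ← hVT yε hyε]
        exact Phi_le_sub_sub_dist_sq_div U V t₀ x₀ ε hθ.le hβ.le tε xε yε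
  linarith [hε₀sep ⟨hε, hεε₀⟩ xε hxε yε hyε]

/-- **The maximizing time stays away from the terminal time (Step 2 of the uniqueness proof).**
In the doubling setting on `I = [a,T]`, if `U(T,·) = V(T,·) = G` with `G` continuous on `B̄`,
`t₀ < T` and `U(t₀,x₀) − V(t₀,x₀) = η > 0`, then there exists `ε₀ > 0` such that for every
`0 < ε < ε₀` any maximum point `(t_ε, x_ε, y_ε)` of `Φ_ε` over `I × B̄ × B̄` has `t_ε < T`. -/
theorem doubling_maximizer_time_lt_terminal {n : ℕ} (a T : ℝ) (ha : 0 ≤ a) (haT : a < T)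
    (z : EuclideanSpace ℝ (Fin n)) (R : ℝ) (hR : 0 ≤ R)
    (t₀ : ℝ) (x₀ : EuclideanSpace ℝ (Fin n))
    (ht₀ : t₀ ∈ Icc a T) (hx₀ : x₀ ∈ closedBall z R) (ht₀T : t₀ < T)
    (θ β : ℝ) (hθ : 0 < θ) (hβ : 0 < β)
    (U V : ℝ → EuclideanSpace ℝ (Fin n) → ℝ)
    (hUbdd : ∃ M : ℝ, ∀ t ∈ Icc a T, ∀ x ∈ closedBall z R, |U t x| ≤ M)
    (hVbdd : ∃ M : ℝ, ∀ t ∈ Icc a T, ∀ x ∈ closedBall z R, |V t x| ≤ M)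
    (G : EuclideanSpace ℝ (Fin n) → ℝ) (hG : ContinuousOn G (closedBall z R))
    (hUT : ∀ x ∈ closedBall z R, U T x = G x)
    (hVT : ∀ x ∈ closedBall z R, V T x = G x)
    (η : ℝ) (hη : 0 < η) (hη' : U t₀ x₀ - V t₀ x₀ = η) :
    ∃ ε₀ > (0 : ℝ), ∀ ε : ℝ, 0 < ε → ε < ε₀ →
      ∀ tε : ℝ, ∀ xε yε : EuclideanSpace ℝ (Fin n),
        tε ∈ Icc a T → xε ∈ closedBall z R → yε ∈ closedBall z R →
        (∀ t ∈ Icc a T, ∀ x ∈ closedBall z R, ∀ y ∈ closedBall z R,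
          Phi U V t₀ x₀ ε θ β t x y ≤ Phi U V t₀ x₀ ε θ β tε xε yε) →
        tε < T :=
  doubling_maximizer_time_lt_terminal_general a T z R t₀ x₀ ht₀ hx₀ θ β hθ hβ U V G hG hUT hVT η hη
    hη'
end
end
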